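/- arXiv:2505.09797 — 2 statements merged into one kernel-verified Lean document; each statement's English description precedes it below -/
import Mathlib

section
/- Let F be a finite field, τ : F → F a field automorphism applied entrywise to matrices, and π an irreducible complex representation of GL_n(F). Suppose π admits a nonzero ψ_c-Whittaker functional for some nondegenerate character ψ_c of the upper unitriangular group U ⊆ GL_n(F). Then the representation g ↦ π*(τ(g)) (the contragredient of π precomposed with entrywise τ) also admits a nonzero ψ_{c'}-Whittaker functional for some nondegenerate character ψ_{c'} of U. -/
open Matrix

/-- A representation is irreducible if the space is nonzero and the only invariant
subspaces are `⊥` and `⊤`. -/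
def IsIrred {G V : Type*} [Group G] [AddCommGroup V] [Module ℂ V]
    (ρ : Representation ℂ G V) : Prop :=
  (∃ v : V, v ≠ 0) ∧
    ∀ W : Submodule ℂ V, (∀ (g : G), ∀ v ∈ W, ρ g v ∈ W) → W = ⊥ ∨ W = ⊤

/-- `M` is upper unitriangular: 1's on the diagonal and 0's below it. -/
def IsUniTri {n : ℕ} {F : Type*} [Field F] (M : Matrix (Fin n) (Fin n) F) : Prop :=
  ∀ i j : Fin n, j ≤ i → M i j = if i = j then 1 else 0

open Finset

section Helpers
variable {F : Type} [Field F]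

lemma IsUniTri.diag_eq {n : ℕ} {M : Matrix (Fin n) (Fin n) F} (h : IsUniTri M) (i : Fin n) :
    M i i = 1 := by simpa using h i i le_rfl

lemma IsUniTri.lt_eq {n : ℕ} {M : Matrix (Fin n) (Fin n) F} (h : IsUniTri M) {i j : Fin n}
    (hji : j < i) : M i j = 0 := by
  rw [h i j hji.le, if_neg hji.ne']

lemma isUniTri_one {n : ℕ} : IsUniTri (1 : Matrix (Fin n) (Fin n) F) := fun i j _ =>
  Matrix.one_apply

lemma uniTri_mul_entry {n : ℕ} {A B : Matrix (Fin n) (Fin n) F} (hA : IsUniTri A)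
    (hB : ∀ i j : Fin n, j < i → B i j = 0) {i j : Fin n} (hji : j ≤ i) :
    (A * B) i j = B i j := by
  rw [Matrix.mul_apply, Finset.sum_eq_single i]
  · rw [hA.diag_eq, one_mul]
  · intro k _ hk
    rcases lt_or_gt_of_ne hk with hlt | hgt
    · rw [hA.lt_eq hlt, zero_mul]
    · rw [hB k j (hji.trans_lt hgt), mul_zero]
  · intro h; exact absurd (Finset.mem_univ i) h

lemma IsUniTri.mul {n : ℕ} {A B : Matrix (Fin n) (Fin n) F} (hA : IsUniTri A)
    (hB : IsUniTri B) : IsUniTri (A * B) := fun i j hji => by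
  rw [uniTri_mul_entry hA (fun _ _ h => hB.lt_eq h) hji, hB i j hji]

lemma mul_superdiag {m : ℕ} {A B : Matrix (Fin (m+1)) (Fin (m+1)) F}
    (hA : IsUniTri A) (hB : IsUniTri B) (i : Fin m) :
    (A * B) i.castSucc i.succ = A i.castSucc i.succ + B i.castSucc i.succ := by
  rw [Matrix.mul_apply]
  have key : ∀ k : Fin (m+1), A i.castSucc k * B k i.succ =
      (if k = i.castSucc then B i.castSucc i.succ else 0)
      + (if k = i.succ then A i.castSucc i.succ else 0) := by
    intro k
    rcases lt_trichotomy k i.castSucc with hk | hk | hk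
    · rw [hA.lt_eq hk, zero_mul, if_neg hk.ne, if_neg (hk.trans (Fin.castSucc_lt_succ : i.castSucc < i.succ)).ne,
        add_zero]
    · subst hk
      rw [if_pos rfl, if_neg (Fin.castSucc_lt_succ : i.castSucc < i.succ).ne, hA.diag_eq, one_mul, add_zero]
    · rcases eq_or_lt_of_le (Fin.castSucc_lt_iff_succ_le.mp hk) with hk' | hk'
      · subst hk'
        rw [if_neg hk.ne', if_pos rfl, hB.diag_eq, mul_one, zero_add]
      · rw [hB.lt_eq hk', mul_zero, if_neg hk.ne', if_neg hk'.ne', add_zero]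
  simp only [key, Finset.sum_add_distrib, Finset.sum_ite_eq', Finset.mem_univ, if_pos]
  ring

lemma IsUniTri.inv {n : ℕ} (u : GL (Fin n) F) (h : IsUniTri (u : Matrix (Fin n) (Fin n) F)) :
    IsUniTri ((u⁻¹ : GL (Fin n) F) : Matrix (Fin n) (Fin n) F) := by
  have hcoe : ((u⁻¹ : GL (Fin n) F) : Matrix (Fin n) (Fin n) F)
      = (u : Matrix (Fin n) (Fin n) F)⁻¹ := Matrix.coe_units_inv u
  have hbt : ((u : Matrix (Fin n) (Fin n) F)).BlockTriangular id := fun i j hij => h.lt_eq hij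
  haveI := u.invertible
  have hbt' := Matrix.blockTriangular_inv_of_blockTriangular hbt
  have hmul : (u : Matrix (Fin n) (Fin n) F) * ((u⁻¹ : GL (Fin n) F) : Matrix (Fin n) (Fin n) F)
      = 1 := by rw [← Units.val_mul, mul_inv_cancel, Units.val_one]
  intro i j hji
  have h2 := uniTri_mul_entry (B := ((u⁻¹ : GL (Fin n) F) : Matrix (Fin n) (Fin n) F)) h
    (fun a b hab => by rw [hcoe]; exact hbt' hab) hji
  rw [hmul] at h2
  rw [← h2, Matrix.one_apply]

lemma inv_superdiag {m : ℕ} (u : GL (Fin (m+1)) F)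
    (h : IsUniTri (u : Matrix (Fin (m+1)) (Fin (m+1)) F)) (i : Fin m) :
    ((u⁻¹ : GL (Fin (m+1)) F) : Matrix (Fin (m+1)) (Fin (m+1)) F) i.castSucc i.succ
      = - (u : Matrix (Fin (m+1)) (Fin (m+1)) F) i.castSucc i.succ := by
  have h2 := h.inv u
  have h3 := mul_superdiag h h2 i
  have hmul : (u : Matrix (Fin (m+1)) (Fin (m+1)) F)
      * ((u⁻¹ : GL (Fin (m+1)) F) : Matrix (Fin (m+1)) (Fin (m+1)) F) = 1 := by
    rw [← Units.val_mul, mul_inv_cancel, Units.val_one]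
  rw [hmul, Matrix.one_apply_ne (Fin.castSucc_lt_succ : i.castSucc < i.succ).ne] at h3
  exact (eq_neg_of_add_eq_zero_right h3.symm)

lemma addChar_sum {ι : Type*} (φ : AddChar F ℂ) (s : Finset ι) (f : ι → F) :
    φ (∑ i ∈ s, f i) = ∏ i ∈ s, φ (f i) := by
  classical
  induction s using Finset.induction_on with
  | empty => simp
  | insert _ _ hx ih => rw [Finset.sum_insert hx, Finset.prod_insert hx, AddChar.map_add_eq_mul, ih]

end Helpers

/-- Let `F` be a finite field, `τ` a field automorphism of `F` (applied
entrywise to matrices), and `π` an irreducible complex representation of `GL_n(F)`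
(`n = m + 1`).  If `π` has a nonzero `ψ_c`-Whittaker functional for some nondegenerate
character `ψ_c(u) = φ(Σ_i c_i u_{i,i+1})` of the upper unitriangular group `U`, then
the representation `g ↦ π*(τ(g))` on `Dual ℂ V` (given by `φv ↦ φv ∘ π((τ g)⁻¹)`)
has a nonzero `ψ_{c'}`-Whittaker functional for some nondegenerate `ψ_{c'}`. -/
theorem stmt13 (F : Type) [Field F] [Fintype F] (τ : F ≃+* F)
    (m : ℕ)
    (V : Type) [AddCommGroup V] [Module ℂ V] [FiniteDimensional ℂ V]
    (π : Representation ℂ (GL (Fin (m + 1)) F) V) (hirr : IsIrred π)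
    (φ : AddChar F ℂ) (hφ : φ ≠ 1)
    (c : Fin m → F) (hc : ∀ i, c i ≠ 0)
    (ℓ : V →ₗ[ℂ] ℂ) (hℓ : ℓ ≠ 0)
    (hwhit : ∀ u : GL (Fin (m + 1)) F, IsUniTri (u : Matrix (Fin (m + 1)) (Fin (m + 1)) F) →
      ∀ v : V, ℓ (π u v) =
        φ (∑ i : Fin m, c i * (u : Matrix (Fin (m + 1)) (Fin (m + 1)) F) i.castSucc i.succ)
          * ℓ v) :
    ∃ c' : Fin m → F, (∀ i, c' i ≠ 0) ∧
      ∃ ℓ' : Module.Dual ℂ V →ₗ[ℂ] ℂ, ℓ' ≠ 0 ∧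
        ∀ u : GL (Fin (m + 1)) F, IsUniTri (u : Matrix (Fin (m + 1)) (Fin (m + 1)) F) →
          ∀ φv : Module.Dual ℂ V,
            ℓ' (φv.comp (π ((Matrix.GeneralLinearGroup.map (τ : F →+* F) u)⁻¹))) =
              φ (∑ i : Fin m, c' i *
                  (u : Matrix (Fin (m + 1)) (Fin (m + 1)) F) i.castSucc i.succ) * ℓ' φv := by
  classical
  haveI : Fintype (GL (Fin (m + 1)) F) := Fintype.ofFinite _
  set s : GL (Fin (m + 1)) F → F :=
    fun u => ∑ i : Fin m, c i * (u : Matrix (Fin (m + 1)) (Fin (m + 1)) F) i.castSucc i.succ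
    with hs
  set S : Finset (GL (Fin (m + 1)) F) :=
    Finset.univ.filter (fun u => IsUniTri (u : Matrix (Fin (m + 1)) (Fin (m + 1)) F)) with hSdef
  have memS : ∀ u, u ∈ S ↔ IsUniTri (u : Matrix (Fin (m + 1)) (Fin (m + 1)) F) := by
    intro u; simp [hSdef]
  have hmulS : ∀ u v, u ∈ S → v ∈ S → u * v ∈ S := by
    intro u v hu hv
    rw [memS] at hu hv ⊢
    rw [Units.val_mul]
    exact hu.mul hv
  have hSinv : ∀ u, u ∈ S → u⁻¹ ∈ S := by
    intro u hu
    rw [memS] at hu ⊢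
    exact hu.inv u
  have hone : (1 : GL (Fin (m + 1)) F) ∈ S := by
    rw [memS, Units.val_one]; exact isUniTri_one
  have hsmul : ∀ u v, u ∈ S → v ∈ S → s (u * v) = s u + s v := by
    intro u v hu hv
    simp only [hs, Units.val_mul]
    rw [← Finset.sum_add_distrib]
    refine Finset.sum_congr rfl fun i _ => ?_
    rw [mul_superdiag ((memS u).mp hu) ((memS v).mp hv) i, mul_add]
  have hsinv : ∀ u, u ∈ S → s u⁻¹ = - s u := by
    intro u hu
    simp only [hs]
    rw [← Finset.sum_neg_distrib]
    refine Finset.sum_congr rfl fun i _ => ?_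
    rw [inv_superdiag u ((memS u).mp hu) i, mul_neg]
  have hψ_unit : ∀ x : F, φ (-x) * φ x = 1 := by
    intro x
    rw [← AddChar.map_add_eq_mul, neg_add_cancel, AddChar.map_zero_eq_one]
  have hwhit' : ∀ u ∈ S, ∀ v : V, ℓ (π u v) = φ (s u) * ℓ v := by
    intro u hu v
    simp only [hs]
    exact hwhit u ((memS u).mp hu) v
  -- the projector onto Whittaker vectors
  set P : V →ₗ[ℂ] V := ∑ u ∈ S, φ (- s u) • (π u : V →ₗ[ℂ] V) with hP
  have hPapp : ∀ v : V, P v = ∑ u ∈ S, φ (- s u) • (π u v) := by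
    intro v
    simp [hP, LinearMap.sum_apply, LinearMap.smul_apply]
  have ha : ∀ v : V, ℓ (P v) = (S.card : ℂ) * ℓ v := by
    intro v
    rw [hPapp, map_sum]
    rw [Finset.sum_congr rfl (fun u hu => ?_), Finset.sum_const, nsmul_eq_mul]
    rw [_root_.map_smul, smul_eq_mul, hwhit' u hu v, ← mul_assoc, hψ_unit, one_mul]
  have hbb : ∀ u₀, u₀ ∈ S → ∀ v : V, π u₀ (P v) = φ (s u₀) • P v := by
    intro u₀ hu₀ v
    rw [hPapp, map_sum, Finset.smul_sum]
    simp only [_root_.map_smul]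
    refine Finset.sum_bij' (fun u _ => u₀ * u) (fun w _ => u₀⁻¹ * w)
      (fun u hu => hmulS _ _ hu₀ hu) (fun w hw => hmulS _ _ (hSinv _ hu₀) hw)
      (fun u hu => by simp) (fun w hw => by simp)
      (fun u hu => ?_)
    have h1 : π u₀ (π u v) = π (u₀ * u) v := by
      rw [_root_.map_mul]; rfl
    rw [h1, smul_smul]
    congr 1
    rw [hsmul u₀ u hu₀ hu, neg_add, AddChar.map_add_eq_mul, ← mul_assoc,
      mul_comm (φ (s u₀)) (φ (- s u₀)), hψ_unit, one_mul]
  -- a nonzero Whittaker vector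
  obtain ⟨w₀, hw₀⟩ : ∃ w₀ : V, ℓ w₀ ≠ 0 := by
    by_contra h
    push_neg at h
    exact hℓ (by ext v; simpa using h v)
  set v₀ : V := P w₀ with hv₀def
  have hℓv₀ : ℓ v₀ ≠ 0 := by
    rw [hv₀def, ha]
    exact mul_ne_zero (Nat.cast_ne_zero.mpr (Finset.card_ne_zero_of_mem hone)) hw₀
  have hv₀ : v₀ ≠ 0 := fun h => hℓv₀ (by rw [h, map_zero])
  have hwvec : ∀ u₀, u₀ ∈ S → π u₀ v₀ = φ (s u₀) • v₀ := fun u₀ hu₀ => hbb u₀ hu₀ w₀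
  -- the twisted character data
  have hprim := AddChar.IsPrimitive.of_ne_one hφ
  have hinj : Function.Injective φ.mulShift := AddChar.to_mulShift_inj_of_isPrimitive hprim
  have hbij : Function.Bijective φ.mulShift := by
    rw [Fintype.bijective_iff_injective_and_card]
    exact ⟨hinj, by simp⟩
  obtain ⟨b, hb⟩ := hbij.2 (φ.compAddMonoidHom (AddMonoidHom.mk' (fun x => τ x) (map_add τ)))
  have hbx : ∀ x : F, φ (b * x) = φ (τ x) := by
    intro x
    have := DFunLike.congr_fun hb x
    simpa using this
  have hbne : b ≠ 0 := by
    rintro rfl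
    apply hφ
    ext x
    have h1 := hbx (τ.symm x)
    rw [zero_mul, AddChar.map_zero_eq_one, RingEquiv.apply_symm_apply] at h1
    rw [← h1, AddChar.one_apply]
  set c' : Fin m → F := fun i => -(b * τ.symm (c i)) with hc'def
  have hc' : ∀ i, c' i ≠ 0 := by
    intro i
    simp only [hc'def]
    refine neg_ne_zero.mpr (mul_ne_zero hbne fun h => hc i ?_)
    rw [← RingEquiv.apply_symm_apply τ (c i), h, map_zero]
  have hkey : ∀ (i : Fin m) (x : F), φ (c' i * x) = φ (-(c i * τ x)) := by
    intro i x
    have h1 : c' i * x = b * (-(τ.symm (c i)) * x) := by simp only [hc'def]; ring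
    rw [h1, hbx, _root_.map_mul, _root_.map_neg, RingEquiv.apply_symm_apply, neg_mul]
  refine ⟨c', hc', Module.Dual.eval ℂ V v₀, ?_, ?_⟩
  · intro h0
    apply hv₀
    rw [← Module.forall_dual_apply_eq_zero_iff ℂ v₀]
    intro f
    exact DFunLike.congr_fun h0 f
  · intro u hu φv
    set g : GL (Fin (m + 1)) F := Matrix.GeneralLinearGroup.map (τ : F →+* F) u with hgdef
    have hmaptri : IsUniTri (g : Matrix (Fin (m + 1)) (Fin (m + 1)) F) := by
      intro i j hji
      rw [hgdef]
      rw [Matrix.GeneralLinearGroup.map_apply]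
      rw [hu i j hji]
      simp [apply_ite (τ : F →+* F)]
    have hgS : g⁻¹ ∈ S := hSinv g ((memS g).mpr hmaptri)
    have hLHS : (Module.Dual.eval ℂ V v₀) (φv.comp (π g⁻¹)) = φv (π g⁻¹ v₀) := rfl
    rw [hLHS, hwvec g⁻¹ hgS, _root_.map_smul, smul_eq_mul]
    have hsw : s g⁻¹ = ∑ i : Fin m,
        -(c i * τ ((u : Matrix (Fin (m + 1)) (Fin (m + 1)) F) i.castSucc i.succ)) := by
      simp only [hs]
      refine Finset.sum_congr rfl fun i _ => ?_
      rw [inv_superdiag g hmaptri i, hgdef, Matrix.GeneralLinearGroup.map_apply, mul_neg]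
      rfl
    have hfin : φ (s g⁻¹) = φ (∑ i : Fin m,
        c' i * (u : Matrix (Fin (m + 1)) (Fin (m + 1)) F) i.castSucc i.succ) := by
      rw [hsw, addChar_sum, addChar_sum]
      exact Finset.prod_congr rfl fun i _ => (hkey i _).symm
    rw [hfin]
    rfl
end

section
/- Let q be an odd prime power and c ∈ 𝔽_q^× a nonsquare. If A, A' ∈ GL_n(𝔽_q) both satisfy A² = A'² = c·I, then A and A' are conjugate in GL_n(𝔽_q): there exists g ∈ GL_n(𝔽_q) with g·A·g⁻¹ = A'. -/
/-!
Since `c` is not a square, `X² - c` is irreducible, so `K = F[X]/(X² - c)` is a field, and a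
matrix `A` with `A² = c` makes `Fⁿ` a `K`-vector space with the root of `X² - c` acting as `A`.
Both `K`-structures (from `A` and from `A'`) have `K`-dimension `n / 2`, so there is a `K`-linear
isomorphism between them; it is an `F`-linear automorphism of `Fⁿ` conjugating `A` into `A'`.
-/

open Matrix Polynomial

theorem irreducible_X_sq_sub_C {F : Type*} [Field F] {c : F} (hc : ¬IsSquare c) :
    Irreducible (X ^ 2 - C c : F[X]) :=
  (X_pow_sub_C_irreducible_iff_of_prime Nat.prime_two).2 fun b hb => hc ⟨b, by rw [← hb, sq]⟩

noncomputable def AdjoinRoot.liftOfSqEq {F R : Type*} [Field F] [Ring R] [Algebra F R] {c : F}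
    {x : R} (hx : x * x = algebraMap F R c) : AdjoinRoot (X ^ 2 - C c) →ₐ[F] R :=
  Ideal.Quotient.liftₐ _ (aeval x) fun a ha => by
    obtain ⟨b, rfl⟩ := Ideal.mem_span_singleton.mp ha
    simp [hx, sq]

theorem AdjoinRoot.liftOfSqEq_root {F R : Type*} [Field F] [Ring R] [Algebra F R] {c : F}
    {x : R} (hx : x * x = algebraMap F R c) : liftOfSqEq hx (root _) = x :=
  aeval_X x

section ModuleVia

variable {F K V : Type*} [Field F] [DivisionRing K] [Algebra F K] [AddCommGroup V] [Module F V]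

def ModuleVia (_ : K →ₐ[F] Module.End F V) : Type _ := V

variable (φ φ' : K →ₐ[F] Module.End F V)

instance : AddCommGroup (ModuleVia φ) := inferInstanceAs (AddCommGroup V)
instance : Module F (ModuleVia φ) := inferInstanceAs (Module F V)
instance : Module K (ModuleVia φ) := Module.compHom V φ.toRingHom

instance : IsScalarTower F K (ModuleVia φ) :=
  ⟨fun a k v => by
    show φ (a • k) v = a • φ k v
    rw [map_smul]; rfl⟩

theorem exists_generalLinearGroup_intertwining [FiniteDimensional F K] [FiniteDimensional F V] :
    ∃ u : LinearMap.GeneralLinearGroup F V, ∀ k, ↑u * φ k = φ' k * ↑u := by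
  have : FiniteDimensional F (ModuleVia φ) := inferInstanceAs (FiniteDimensional F V)
  have : FiniteDimensional F (ModuleVia φ') := inferInstanceAs (FiniteDimensional F V)
  have : FiniteDimensional K (ModuleVia φ) := .right F K _
  have : FiniteDimensional K (ModuleVia φ') := .right F K _
  have hrank : Module.finrank K (ModuleVia φ) = Module.finrank K (ModuleVia φ') :=
    Nat.eq_of_mul_eq_mul_left (Module.finrank_pos (R := F) (M := K)) <| by
      rw [Module.finrank_mul_finrank, Module.finrank_mul_finrank]; rfl
  let e := LinearEquiv.ofFinrankEq _ _ hrank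
  exact ⟨.ofLinearEquiv (e.restrictScalars F), fun k => LinearMap.ext (e.map_smul k)⟩

end ModuleVia

theorem stmt16_general
    (F : Type*) [Field F]
    (c : F) (hc : ¬ IsSquare c)
    (n : ℕ) (A A' : GL (Fin n) F)
    (hA : (A : Matrix (Fin n) (Fin n) F) * (A : Matrix (Fin n) (Fin n) F) =
      c • (1 : Matrix (Fin n) (Fin n) F))
    (hA' : (A' : Matrix (Fin n) (Fin n) F) * (A' : Matrix (Fin n) (Fin n) F) =
      c • (1 : Matrix (Fin n) (Fin n) F)) :
    ∃ g : GL (Fin n) F, g * A * g⁻¹ = A' := by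
  have : Fact (Irreducible (X ^ 2 - C c)) := ⟨irreducible_X_sq_sub_C hc⟩
  have : FiniteDimensional F (AdjoinRoot (X ^ 2 - C c)) :=
    (monic_X_pow_sub_C c two_ne_zero).finite_adjoinRoot
  rw [← Algebra.algebraMap_eq_smul_one] at hA hA'
  obtain ⟨u, hu⟩ := exists_generalLinearGroup_intertwining
    (toLinAlgEquiv'.toAlgHom.comp (AdjoinRoot.liftOfSqEq hA))
    (toLinAlgEquiv'.toAlgHom.comp (AdjoinRoot.liftOfSqEq hA'))
  refine ⟨Units.map LinearMap.toMatrixAlgEquiv'.toMonoidHom u, mul_inv_eq_of_eq_mul ?_⟩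
  ext1
  apply toLinAlgEquiv'.injective
  simpa [AdjoinRoot.liftOfSqEq_root] using hu (AdjoinRoot.root _)

/-- Let `q` be an odd prime power and `c ∈ 𝔽_q^×` a nonsquare.
Any two matrices `A, A' ∈ GL_n(𝔽_q)` with `A² = A'² = c·I` are conjugate in `GL_n(𝔽_q)`. -/
theorem stmt16 (q : ℕ) (hq : Odd q) (hq' : IsPrimePow q)
    (F : Type*) [Field F] [Fintype F] (hF : Fintype.card F = q)
    (c : F) (hc : ¬ IsSquare c)
    (n : ℕ) (A A' : GL (Fin n) F)
    (hA : (A : Matrix (Fin n) (Fin n) F) * (A : Matrix (Fin n) (Fin n) F) =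
      c • (1 : Matrix (Fin n) (Fin n) F))
    (hA' : (A' : Matrix (Fin n) (Fin n) F) * (A' : Matrix (Fin n) (Fin n) F) =
      c • (1 : Matrix (Fin n) (Fin n) F)) :
    ∃ g : GL (Fin n) F, g * A * g⁻¹ = A' :=
  stmt16_general F c hc n A A' hA hA'
end
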